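/- Let M = (S, s₀, X, Y, δ, λ) be an FSM with n states whose distinct states are pairwise strongly separable, with witness function ω, state identification sets W(s), and state cover V as in the context, and let M_I = (Q, q₀, X, Y, δ_I, λ_I) be an FSM over the same alphabets. Suppose that M_I does not conform to M, that for all v ∈ V and all w ∈ W(δ(s₀, v)) we have M ≈_{v·w} M_I, and that M_I has at most k more states than M, i.e., |Q| ≤ n + k. Then there exist v ∈ V and an input sequence x̄ with |x̄| ≤ k + 1 such that either M ≉_{v·x̄} M_I, or there is some w ∈ W(δ(s₀, v·x̄)) with M ≉_{v·x̄·w} M_I. -/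
import Mathlib


/-- A (deterministic, completely-specified) FSM over input alphabet `X` and
output alphabet `Y`, with state type `S`: an initial state, a total transition
function and a total output function. -/
structure FSM (X Y S : Type) where
  init : S
  tr : S → X → S
  out : S → X → Y

namespace FSM

variable {X Y S : Type}

/-- The transition function extended to input sequences. -/
def trs (M : FSM X Y S) : S → List X → S
  | s, [] => s
  | s, x :: xs => M.trs (M.tr s x) xs

/-- The output function extended to input sequences. -/
def outs (M : FSM X Y S) : S → List X → List Y
  | _, [] => []
  | s, x :: xs => M.out s x :: M.outs (M.tr s x) xs

end FSM

/-- The input sequence `xs` separates state `s` of `M` from state `q` of `M'`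
(w.r.t. the similarity relation `sim`, lifted componentwise to sequences). -/
def Separates {X Y S S' : Type} (sim : Y → Y → Prop) (M : FSM X Y S) (M' : FSM X Y S')
    (s : S) (q : S') (xs : List X) : Prop :=
  ¬ List.Forall₂ sim (M.outs s xs) (M'.outs q xs)

/-- `xs` is a witness that states `s₁`, `s₂` of `M` are strongly separable:
every state `s₃` of every FSM `M'` over the same alphabets is separated by `xs`
from `s₁` or from `s₂`. -/
def StrongWitness {X Y S : Type} (sim : Y → Y → Prop) (M : FSM X Y S)
    (s₁ s₂ : S) (xs : List X) : Prop :=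
  ∀ (S' : Type) [Fintype S'] (M' : FSM X Y S') (s₃ : S'),
    Separates sim M M' s₁ s₃ xs ∨ Separates sim M M' s₂ s₃ xs

/-- `MI` conforms to `M`: on every input sequence the outputs are similar. -/
def Conforms {X Y S Q : Type} (sim : Y → Y → Prop) (MI : FSM X Y Q) (M : FSM X Y S) : Prop :=
  ∀ xs : List X, List.Forall₂ sim (M.outs M.init xs) (MI.outs MI.init xs)

/-- A state cover: a prefix-closed set of input sequences containing, for each
state, exactly one sequence reaching it from the initial state. -/
def StateCover {X Y S : Type} (M : FSM X Y S) (V : Set (List X)) : Prop :=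
  (∀ v ∈ V, ∀ u, u <+: v → u ∈ V) ∧
  ∀ s : S, ∃! v, v ∈ V ∧ M.trs M.init v = s

open Classical in
/-- One step of the product machine `P(M, MI)`; `none` is the error state `e`. -/
noncomputable def prodStep {X Y S Q : Type} (sim : Y → Y → Prop) (M : FSM X Y S)
    (MI : FSM X Y Q) : Option (S × Q) → X → Option (S × Q)
  | none, _ => none
  | some (s, q), x =>
      if sim (M.out s x) (MI.out q x) then some (M.tr s x, MI.tr q x) else none

/-- The transition function of the product machine extended to input sequences. -/
noncomputable def prodTrs {X Y S Q : Type} (sim : Y → Y → Prop) (M : FSM X Y S)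
    (MI : FSM X Y Q) : Option (S × Q) → List X → Option (S × Q)
  | p, [] => p
  | p, x :: xs => prodTrs sim M MI (prodStep sim M MI p x) xs

/-- The set `D_ℓ` of pairs `(v, x̄)` with `v ∈ V`, `|x̄| = ℓ`, and `M ≉_{v·x̄} M_I`. -/
def DSet {X Y S Q : Type} (sim : Y → Y → Prop) (M : FSM X Y S) (MI : FSM X Y Q)
    (V : Set (List X)) (ℓ : ℕ) : Set (List X × List X) :=
  {p | p.1 ∈ V ∧ p.2.length = ℓ ∧
    ¬ List.Forall₂ sim (M.outs M.init (p.1 ++ p.2)) (MI.outs MI.init (p.1 ++ p.2))}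

/-- The set `DW_ℓ` of pairs `(v, x̄)` with `v ∈ V`, `|x̄| = ℓ`, and
`M ≉_{v·x̄·w} M_I` for some `w ∈ W(δ(s₀, v·x̄))`. -/
def DWSet {X Y S Q : Type} (sim : Y → Y → Prop) (M : FSM X Y S) (MI : FSM X Y Q)
    (V : Set (List X)) (W : S → Set (List X)) (ℓ : ℕ) : Set (List X × List X) :=
  {p | p.1 ∈ V ∧ p.2.length = ℓ ∧
    ∃ w ∈ W (M.trs M.init (p.1 ++ p.2)),
      ¬ List.Forall₂ sim (M.outs M.init (p.1 ++ p.2 ++ w))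
          (MI.outs MI.init (p.1 ++ p.2 ++ w))}


namespace FSM

theorem trs_append' {X Y S : Type} (M : FSM X Y S) (s : S) (a b : List X) :
    M.trs s (a ++ b) = M.trs (M.trs s a) b := by
  induction a generalizing s with
  | nil => rfl
  | cons x xs ih => simp [trs, ih]

theorem outs_append' {X Y S : Type} (M : FSM X Y S) (s : S) (a b : List X) :
    M.outs s (a ++ b) = M.outs s a ++ M.outs (M.trs s a) b := by
  induction a generalizing s with
  | nil => rfl
  | cons x xs ih => simp [outs, trs, ih]

theorem outs_length' {X Y S : Type} (M : FSM X Y S) (s : S) (a : List X) :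
    (M.outs s a).length = a.length := by
  induction a generalizing s with
  | nil => rfl
  | cons x xs ih => simp [outs, ih]

end FSM

theorem forall₂_append_split' {α β : Type*} {R : α → β → Prop} {l₁ l₂ : List α} {m₁ m₂ : List β}
    (h : l₁.length = m₁.length) :
    List.Forall₂ R (l₁ ++ l₂) (m₁ ++ m₂) ↔ List.Forall₂ R l₁ m₁ ∧ List.Forall₂ R l₂ m₂ := by
  induction l₁ generalizing m₁ with
  | nil =>
    cases m₁ with
    | nil => simp
    | cons b t => simp at h
  | cons a t ih =>
    cases m₁ with
    | nil => simp at h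
    | cons b t' =>
      simp only [List.cons_append, List.forall₂_cons] at *
      rw [ih (by simpa using h)]
      tauto

/-- The set of product-machine states reached by `v · x̄` with `v ∈ V`, `|x̄| ≤ ℓ`. -/
def PSet' {X Y S Q : Type} (M : FSM X Y S) (MI : FSM X Y Q) (V : Set (List X)) (ℓ : ℕ) :
    Set (S × Q) :=
  {p | ∃ v ∈ V, ∃ xb : List X, xb.length ≤ ℓ ∧
    p = (M.trs M.init (v ++ xb), MI.trs MI.init (v ++ xb))}

/-- if `M_I` does not conform to `M`, passes `V` followed by the
state identification sets, and has at most `k` more states than `M`, then a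
failure is exhibited by some `v·x̄` or `v·x̄·w` with `v ∈ V`, `|x̄| ≤ k + 1`,
and `w ∈ W(δ(s₀, v·x̄))`. -/
theorem failure_within_bound {X Y S Q : Type} [Fintype X] [Fintype S] [Fintype Q]
    (sim : Y → Y → Prop) (M : FSM X Y S) (MI : FSM X Y Q) (n : ℕ)
    (hn : Fintype.card S = n)
    (ω : S → S → List X)
    (hω : ∀ s₁ s₂ : S, s₁ ≠ s₂ →
      ω s₁ s₂ = ω s₂ s₁ ∧ StrongWitness sim M s₁ s₂ (ω s₁ s₂))
    (W : S → Set (List X))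
    (hW : ∀ s₁ s₂ : S, s₁ ≠ s₂ →
      (∃ w ∈ W s₁, ω s₁ s₂ <+: w) ∧ (∃ w ∈ W s₂, ω s₁ s₂ <+: w))
    (V : Set (List X)) (hV : StateCover M V)
    (hVW : ∀ v ∈ V, ∀ w ∈ W (M.trs M.init v),
      List.Forall₂ sim (M.outs M.init (v ++ w)) (MI.outs MI.init (v ++ w)))
    (hnc : ¬ Conforms sim MI M)
    (k : ℕ) (hk : Fintype.card Q ≤ n + k) :
    ∃ v ∈ V, ∃ xb : List X, xb.length ≤ k + 1 ∧
      (¬ List.Forall₂ sim (M.outs M.init (v ++ xb)) (MI.outs MI.init (v ++ xb)) ∨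
       ∃ w ∈ W (M.trs M.init (v ++ xb)),
         ¬ List.Forall₂ sim (M.outs M.init (v ++ xb ++ w))
             (MI.outs MI.init (v ++ xb ++ w))) := by
  by_contra hcon
  push_neg at hcon
  have hsplit : ∀ (s : S) (q : Q) (σ τ : List X),
      List.Forall₂ sim (M.outs s (σ ++ τ)) (MI.outs q (σ ++ τ)) ↔
        List.Forall₂ sim (M.outs s σ) (MI.outs q σ) ∧
          List.Forall₂ sim (M.outs (M.trs s σ) τ) (MI.outs (MI.trs q σ) τ) := by
    intro s q σ τ
    rw [M.outs_append', MI.outs_append',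
      forall₂_append_split' (by rw [M.outs_length', MI.outs_length'])]
  have hid : ∀ v ∈ V, ∀ xb : List X, xb.length ≤ k + 1 →
      ∀ w ∈ W (M.trs M.init (v ++ xb)),
        List.Forall₂ sim (M.outs (M.trs M.init (v ++ xb)) w)
          (MI.outs (MI.trs MI.init (v ++ xb)) w) := by
    intro v hv xb hl w hw
    have h := (hcon v hv xb hl).2 w hw
    exact ((hsplit M.init MI.init (v ++ xb) w).mp h).2
  have huniq : ∀ (s₁ s₂ : S) (q : Q), s₁ ≠ s₂ →
      (∀ w ∈ W s₁, List.Forall₂ sim (M.outs s₁ w) (MI.outs q w)) →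
      (∀ w ∈ W s₂, List.Forall₂ sim (M.outs s₂ w) (MI.outs q w)) → False := by
    intro s₁ s₂ q hne h1 h2
    obtain ⟨⟨w₁, hw₁, hp₁⟩, ⟨w₂, hw₂, hp₂⟩⟩ := hW s₁ s₂ hne
    have hprefix : ∀ (s : S) (w : List X), ω s₁ s₂ <+: w →
        List.Forall₂ sim (M.outs s w) (MI.outs q w) →
        List.Forall₂ sim (M.outs s (ω s₁ s₂)) (MI.outs q (ω s₁ s₂)) := by
      intro s w hpre hfa
      obtain ⟨r, hr⟩ := hpre
      rw [← hr] at hfa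
      exact ((hsplit s q (ω s₁ s₂) r).mp hfa).1
    rcases (hω s₁ s₂ hne).2 Q MI q with hsep | hsep
    · exact hsep (hprefix s₁ w₁ hp₁ (h1 w₁ hw₁))
    · exact hsep (hprefix s₂ w₂ hp₂ (h2 w₂ hw₂))
  have hmono : ∀ ℓ, PSet' M MI V ℓ ⊆ PSet' M MI V (ℓ + 1) := by
    rintro ℓ p ⟨v, hv, xb, hl, he⟩
    exact ⟨v, hv, xb, hl.trans (Nat.le_succ _), he⟩
  have hfin : ∀ ℓ, (PSet' M MI V ℓ).Finite := fun ℓ => Set.toFinite _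
  have hsnd : ∀ ℓ ≤ k + 1, Set.InjOn Prod.snd (PSet' M MI V ℓ) := by
    intro ℓ hℓ p₁ hp₁ p₂ hp₂ hq
    obtain ⟨v₁, hv₁, xb₁, hl₁, he₁⟩ := hp₁
    obtain ⟨v₂, hv₂, xb₂, hl₂, he₂⟩ := hp₂
    by_contra hne'
    have hne : p₁.1 ≠ p₂.1 := fun h => hne' (Prod.ext h hq)
    refine huniq p₁.1 p₂.1 p₁.2 hne ?_ ?_
    · intro w hw
      have := hid v₁ hv₁ xb₁ (hl₁.trans hℓ) w (by rw [he₁] at hw; exact hw)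
      rw [he₁]; exact this
    · intro w hw
      have := hid v₂ hv₂ xb₂ (hl₂.trans hℓ) w (by rw [he₂] at hw; exact hw)
      rw [hq, he₂]; exact this
  have hcard_le : ∀ ℓ ≤ k + 1, (PSet' M MI V ℓ).ncard ≤ n + k := by
    intro ℓ hℓ
    calc (PSet' M MI V ℓ).ncard = (Prod.snd '' PSet' M MI V ℓ).ncard :=
          (Set.ncard_image_of_injOn (hsnd ℓ hℓ)).symm
      _ ≤ (Set.univ : Set Q).ncard := Set.ncard_le_ncard (Set.subset_univ _) (Set.toFinite _)
      _ = Fintype.card Q := by rw [Set.ncard_univ, Nat.card_eq_fintype_card]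
      _ ≤ n + k := hk
  have hcard0 : (PSet' M MI V 0).ncard = n := by
    have hinjfst : Set.InjOn Prod.fst (PSet' M MI V 0) := by
      intro p₁ hp₁ p₂ hp₂ hfst
      obtain ⟨v₁, hv₁, xb₁, hl₁, he₁⟩ := hp₁
      obtain ⟨v₂, hv₂, xb₂, hl₂, he₂⟩ := hp₂
      have hxb₁ : xb₁ = [] := List.length_eq_zero_iff.mp (Nat.le_zero.mp hl₁)
      have hxb₂ : xb₂ = [] := List.length_eq_zero_iff.mp (Nat.le_zero.mp hl₂)
      subst hxb₁; subst hxb₂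
      rw [List.append_nil] at he₁ he₂
      obtain ⟨v, ⟨hvV, hvs⟩, hvu⟩ := hV.2 (M.trs M.init v₁)
      have h1 : v₁ = v := hvu v₁ ⟨hv₁, rfl⟩
      have h2 : v₂ = v := by
        apply hvu v₂
        refine ⟨hv₂, ?_⟩
        have : p₁.1 = M.trs M.init v₁ := by rw [he₁]
        have h2' : p₂.1 = M.trs M.init v₂ := by rw [he₂]
        rw [← h2', ← hfst, this]
      rw [he₁, he₂, h1, h2]
    have hsurj : Prod.fst '' PSet' M MI V 0 = Set.univ := by
      apply Set.eq_univ_of_forall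
      intro s
      obtain ⟨v, ⟨hvV, hvs⟩, _⟩ := hV.2 s
      exact ⟨(M.trs M.init v, MI.trs MI.init v),
        ⟨v, hvV, [], le_rfl, by rw [List.append_nil]⟩, hvs⟩
    calc (PSet' M MI V 0).ncard = (Prod.fst '' PSet' M MI V 0).ncard :=
          (Set.ncard_image_of_injOn hinjfst).symm
      _ = n := by rw [hsurj, Set.ncard_univ, Nat.card_eq_fintype_card, hn]
  have hstab : ∃ ℓ ≤ k, PSet' M MI V (ℓ + 1) ⊆ PSet' M MI V ℓ := by
    by_contra hst
    push_neg at hst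
    have hgrow : ∀ ℓ ≤ k + 1, n + ℓ ≤ (PSet' M MI V ℓ).ncard := by
      intro ℓ hℓ
      induction ℓ with
      | zero => simp [hcard0]
      | succ m ih =>
        have h1 := ih (by omega)
        have hnsub := hst m (by omega)
        have hss : PSet' M MI V m ⊂ PSet' M MI V (m + 1) :=
          lt_iff_le_not_ge.mpr ⟨hmono m, hnsub⟩
        have := Set.ncard_lt_ncard hss (hfin _)
        omega
    have h1 := hgrow (k + 1) le_rfl
    have h2 := hcard_le (k + 1) le_rfl
    omega
  obtain ⟨ℓ, hℓk, hclosed⟩ := hstab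
  have hstep : ∀ p ∈ PSet' M MI V ℓ, ∀ x : X,
      sim (M.out p.1 x) (MI.out p.2 x) ∧ (M.tr p.1 x, MI.tr p.2 x) ∈ PSet' M MI V ℓ := by
    intro p hp x
    obtain ⟨v, hv, xb, hl, he⟩ := hp
    have hlen : (xb ++ [x]).length ≤ k + 1 := by
      simp only [List.length_append, List.length_singleton]; omega
    have hpass := (hcon v hv (xb ++ [x]) hlen).1
    rw [← List.append_assoc] at hpass
    have h2 := ((hsplit M.init MI.init (v ++ xb) [x]).mp hpass).2
    rw [he]
    constructor
    · simpa [FSM.outs] using h2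
    · apply hclosed
      refine ⟨v, hv, xb ++ [x], by
        simp only [List.length_append, List.length_singleton]; omega, ?_⟩
      rw [← List.append_assoc, M.trs_append' _ (v ++ xb) [x],
        MI.trs_append' _ (v ++ xb) [x]]
      simp [FSM.trs]
  have hrun : ∀ σ : List X, ∀ p ∈ PSet' M MI V ℓ,
      List.Forall₂ sim (M.outs p.1 σ) (MI.outs p.2 σ) := by
    intro σ
    induction σ with
    | nil => intro p hp; exact List.Forall₂.nil
    | cons x xs ih =>
      intro p hp
      obtain ⟨h1, h2⟩ := hstep p hp x
      exact List.Forall₂.cons h1 (ih _ h2)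
  have hinit : ((M.init, MI.init) : S × Q) ∈ PSet' M MI V ℓ := by
    obtain ⟨v, ⟨hvV, _⟩, _⟩ := hV.2 M.init
    have hε : ([] : List X) ∈ V := hV.1 v hvV [] (List.nil_prefix)
    exact ⟨[], hε, [], Nat.zero_le _, rfl⟩
  exact hnc fun σ => hrun σ _ hinit
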